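/- For every base B, all sets Γ_At and Δ_At of atoms, every atom p, and each sign * ∈ {+,−}: Γ_At;Δ_At ⊩*_B p holds if and only if Γ_At;Δ_At ⊢*_B p holds. -/

import Mathlib

/-- Signs: `pos` for proof/assertion, `neg` for refutation/rejection. -/
inductive Sign where
  | pos
  | neg
deriving DecidableEq

/-- The dual of a sign. -/
def Sign.dual : Sign → Sign
  | .pos => .neg
  | .neg => .pos

/-- Formulas of the bilateral logic 2Int. -/
inductive Form where
  | atom : ℕ → Form
  | bot : Form
  | top : Form
  | and : Form → Form → Form
  | or : Form → Form → Form
  | imp : Form → Form → Form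
  | coimp : Form → Form → Form
deriving DecidableEq

/-- A premise of an atomic rule: the sign required (proof or refutation), the premise atom,
and the sets of dischargeable atomic proof assumptions and refutation assumptions. -/
structure Premise where
  sign : Sign
  concl : ℕ
  dischargePf : Set ℕ
  dischargeRf : Set ℕ

/-- An atomic rule: a list of premises, a marking as proof (`pos`) or refutation (`neg`) rule,
and an atomic conclusion. -/
structure AtomicRule where
  prems : List Premise
  sign : Sign
  concl : ℕ

/-- A bilateral atomic system (base) is a set of atomic rules. -/
abbrev Base := Set AtomicRule

/-- `AtDeriv B s Γ Δ p` formalizes `Γ;Δ ⊢^s_B p`: there is a deduction in `B` of the atom `p`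
whose open atomic proof assumptions are contained in `Γ` and open atomic refutation
assumptions in `Δ`, consisting of a single assumption of sign `s` or ending with a rule of
sign `s`. -/
inductive AtDeriv (B : Base) : Sign → Set ℕ → Set ℕ → ℕ → Prop
  | hypPos {Γ Δ : Set ℕ} {p : ℕ} : p ∈ Γ → AtDeriv B .pos Γ Δ p
  | hypNeg {Γ Δ : Set ℕ} {p : ℕ} : p ∈ Δ → AtDeriv B .neg Γ Δ p
  | app {Γ Δ : Set ℕ} {R : AtomicRule} (hR : R ∈ B)
      (h : ∀ pr ∈ R.prems,
        AtDeriv B pr.sign (Γ ∪ pr.dischargePf) (Δ ∪ pr.dischargeRf) pr.concl) :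
      AtDeriv B R.sign Γ Δ R.concl

/-- Bilateral validity (support) `⊩^s_B φ`, by recursion on the formula. -/
def Supp : Form → Base → Sign → Prop
  | .atom p, B, s => AtDeriv B s ∅ ∅ p
  | .bot, B, .pos => ∀ p : ℕ, AtDeriv B .pos ∅ ∅ p ∧ AtDeriv B .neg ∅ ∅ p
  | .bot, _, .neg => True
  | .top, _, .pos => True
  | .top, B, .neg => ∀ p : ℕ, AtDeriv B .pos ∅ ∅ p ∧ AtDeriv B .neg ∅ ∅ p
  | .and φ ψ, B, .pos => Supp φ B .pos ∧ Supp ψ B .pos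
  | .and φ ψ, B, .neg => ∀ C : Base, B ⊆ C → ∀ p : ℕ,
      (((∀ D : Base, C ⊆ D → Supp φ D .neg → AtDeriv D .pos ∅ ∅ p) ∧
        (∀ D : Base, C ⊆ D → Supp ψ D .neg → AtDeriv D .pos ∅ ∅ p)) →
        AtDeriv C .pos ∅ ∅ p) ∧
      (((∀ D : Base, C ⊆ D → Supp φ D .neg → AtDeriv D .neg ∅ ∅ p) ∧
        (∀ D : Base, C ⊆ D → Supp ψ D .neg → AtDeriv D .neg ∅ ∅ p)) →
        AtDeriv C .neg ∅ ∅ p)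
  | .or φ ψ, B, .pos => ∀ C : Base, B ⊆ C → ∀ p : ℕ,
      (((∀ D : Base, C ⊆ D → Supp φ D .pos → AtDeriv D .pos ∅ ∅ p) ∧
        (∀ D : Base, C ⊆ D → Supp ψ D .pos → AtDeriv D .pos ∅ ∅ p)) →
        AtDeriv C .pos ∅ ∅ p) ∧
      (((∀ D : Base, C ⊆ D → Supp φ D .pos → AtDeriv D .neg ∅ ∅ p) ∧
        (∀ D : Base, C ⊆ D → Supp ψ D .pos → AtDeriv D .neg ∅ ∅ p)) →
        AtDeriv C .neg ∅ ∅ p)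
  | .or φ ψ, B, .neg => Supp φ B .neg ∧ Supp ψ B .neg
  | .imp φ ψ, B, .pos => ∀ C : Base, B ⊆ C → Supp φ C .pos → Supp ψ C .pos
  | .imp φ ψ, B, .neg => Supp φ B .pos ∧ Supp ψ B .neg
  | .coimp φ ψ, B, .pos => Supp φ B .pos ∧ Supp ψ B .neg
  | .coimp φ ψ, B, .neg => ∀ C : Base, B ⊆ C → Supp ψ C .neg → Supp φ C .neg

open Classical in
/-- `Cons B Γ Δ s χ` formalizes `Γ;Δ ⊩^s_B χ`. -/
def Cons (B : Base) (Γ Δ : Set Form) (s : Sign) (χ : Form) : Prop :=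
  if Γ = ∅ ∧ Δ = ∅ then Supp χ B s
  else ∀ C : Base, B ⊆ C →
    (∀ φ ∈ Γ, Supp φ C .pos) → (∀ ψ ∈ Δ, Supp ψ C .neg) → Supp χ C s

/-!
Soundness is cut: a derivation from `Γ;Δ` composes with derivations of the assumptions in any
extension of `B`. For completeness, extend `B` by premise-free rules proving the atoms of `Γ` and
refuting those of `Δ`. In that extension every assumption is supported, so `p` is derivable there;
replacing each use of an added rule by the corresponding open assumption gives a derivation of `p`
in `B` from `Γ;Δ`.
-/

namespace AtDeriv

variable {B C : Base} {s : Sign} {Γ Δ Γ' Δ' : Set ℕ} {p : ℕ}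

lemma mono (h : AtDeriv B s Γ Δ p) (hBC : B ⊆ C) (hΓ : Γ ⊆ Γ') (hΔ : Δ ⊆ Δ') :
    AtDeriv C s Γ' Δ' p := by
  induction h generalizing Γ' Δ' with
  | hypPos h => exact .hypPos (hΓ h)
  | hypNeg h => exact .hypNeg (hΔ h)
  | app hR _ ih =>
      exact .app (hBC hR) fun pr hpr =>
        ih pr hpr (Set.union_subset_union_left _ hΓ) (Set.union_subset_union_left _ hΔ)

lemma cut (h : AtDeriv B s Γ Δ p) (hBC : B ⊆ C)
    (hΓ : ∀ q ∈ Γ, AtDeriv C .pos Γ' Δ' q) (hΔ : ∀ q ∈ Δ, AtDeriv C .neg Γ' Δ' q) :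
    AtDeriv C s Γ' Δ' p := by
  induction h generalizing Γ' Δ' with
  | hypPos h => exact hΓ _ h
  | hypNeg h => exact hΔ _ h
  | app hR _ ih =>
      refine .app (hBC hR) fun pr hpr => ih pr hpr ?_ ?_
      · rintro q (hq | hq)
        · exact (hΓ q hq).mono subset_rfl Set.subset_union_left Set.subset_union_left
        · exact .hypPos (Or.inr hq)
      · rintro q (hq | hq)
        · exact (hΔ q hq).mono subset_rfl Set.subset_union_left Set.subset_union_left
        · exact .hypNeg (Or.inr hq)

end AtDeriv

def assumptionRules (Γ Δ : Set ℕ) : Base :=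
  (fun q => ⟨[], .pos, q⟩) '' Γ ∪ (fun q => ⟨[], .neg, q⟩) '' Δ

namespace AtDeriv

variable {B : Base} {s : Sign} {Γ Δ Γa Δa : Set ℕ} {p : ℕ}

lemma assumptionRules_pos (hp : p ∈ Γa) : AtDeriv (B ∪ assumptionRules Γa Δa) .pos Γ Δ p :=
  .app (R := ⟨[], .pos, p⟩) (Or.inr (Or.inl ⟨p, hp, rfl⟩)) nofun

lemma assumptionRules_neg (hp : p ∈ Δa) : AtDeriv (B ∪ assumptionRules Γa Δa) .neg Γ Δ p :=
  .app (R := ⟨[], .neg, p⟩) (Or.inr (Or.inr ⟨p, hp, rfl⟩)) nofun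

lemma of_union_assumptionRules (h : AtDeriv (B ∪ assumptionRules Γa Δa) s Γ Δ p) :
    AtDeriv B s (Γ ∪ Γa) (Δ ∪ Δa) p := by
  induction h with
  | hypPos h => exact .hypPos (Or.inl h)
  | hypNeg h => exact .hypNeg (Or.inl h)
  | app hR _ ih =>
      rcases hR with hR | ⟨q, hq, rfl⟩ | ⟨q, hq, rfl⟩
      · refine .app hR fun pr hpr => ?_
        rw [Set.union_right_comm _ Γa, Set.union_right_comm _ Δa]
        exact ih pr hpr
      · exact .hypPos (Or.inr hq)
      · exact .hypNeg (Or.inr hq)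

end AtDeriv

theorem atomic_support_iff_derivability (B : Base) (Γa Δa : Set ℕ) (p : ℕ) (s : Sign) :
    Cons B (Form.atom '' Γa) (Form.atom '' Δa) s (.atom p) ↔ AtDeriv B s Γa Δa p := by
  unfold Cons
  split_ifs with hempty
  · obtain ⟨rfl, rfl⟩ : Γa = ∅ ∧ Δa = ∅ := by simpa only [Set.image_eq_empty] using hempty
    rfl
  constructor
  · intro hcons
    have hext : AtDeriv (B ∪ assumptionRules Γa Δa) s ∅ ∅ p :=
      hcons _ Set.subset_union_left
        (by rintro _ ⟨q, hq, rfl⟩; exact .assumptionRules_pos hq)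
        (by rintro _ ⟨q, hq, rfl⟩; exact .assumptionRules_neg hq)
    simpa only [Set.empty_union] using hext.of_union_assumptionRules
  · intro hd C hBC hΓ hΔ
    exact hd.cut hBC (fun q hq => hΓ _ ⟨q, hq, rfl⟩) (fun q hq => hΔ _ ⟨q, hq, rfl⟩)
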